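/- arXiv:2201.12009 — 2 statements merged into one kernel-verified Lean document; each statement's English description precedes it below -/
import Mathlib

section
/- For i ≥ 2, the identity 4·∑_{s=0}^{i-1} a(2i-s-1, 2i-2) - 2·a(i, 2i-2) = 2·C(2i-1, i) holds, where a(d,g) = (2d-g-1)·g!/(d!·(g-d+1)!). -/
open Finset

/-- `a(d,g) = (2d-g-1)·g!/(d!·(g-d+1)!)` as a rational number. -/
noncomputable def aPencil (d g : ℕ) : ℚ :=
  ((2 * d : ℚ) - g - 1) * Nat.factorial g /
    (Nat.factorial d * Nat.factorial (g - d + 1))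

/-!
Writing `a(d, g) = (2d-g-1)/(g+1) · C(g+1, d)` and splitting `2d-g-1 = d - (g+1-d)`, the two
absorption identities turn `a(d+1, g)` into the difference `C(g, d) - C(g, d+1)`. The sum over
`s < i` therefore telescopes to `C(2i-2, i-1)`, and `a(i, 2i-2) = C(2i-2, i-1) - C(2i-2, i)`,
so the left-hand side is `2 (C(2i-2, i-1) + C(2i-2, i)) = 2 C(2i-1, i)` by Pascal's rule.
-/

theorem aPencil_mul_succ {d g : ℕ} (hd : d ≤ g + 1) :
    aPencil d g * (g + 1) = (2 * d - g - 1) * (g + 1).choose d := by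
  -- for `d = g + 1` the truncated `g - d + 1` is `1`, not `0`, but `0! = 1!`
  have hfact : (g - d + 1).factorial = (g + 1 - d).factorial := by
    rcases hd.lt_or_eq with hlt | rfl
    · congr 1; omega
    · simp
  rw [aPencil, hfact, Nat.cast_choose ℚ hd, Nat.factorial_succ]
  push_cast
  field_simp

theorem aPencil_succ_eq_choose_sub_choose {d g : ℕ} (hd : d ≤ g) :
    aPencil (d + 1) g = g.choose d - g.choose (d + 1) := by
  have hlow : (g.choose d : ℚ) * (g + 1) = (g + 1).choose (d + 1) * (d + 1) := by
    rw [mul_comm]; exact_mod_cast Nat.add_one_mul_choose_eq g d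
  have hhigh : (g.choose (d + 1) : ℚ) * (g + 1) = (g + 1).choose (d + 1) * (g - d) := by
    have h : g + 1 - (d + 1) = g - d := by omega
    rw [← Nat.cast_sub hd]
    exact_mod_cast h ▸ Nat.choose_mul_succ_eq g (d + 1)
  refine mul_right_cancel₀ (by positivity : (g : ℚ) + 1 ≠ 0) ?_
  rw [aPencil_mul_succ (by omega)]
  push_cast
  linear_combination hhigh - hlow

theorem sum_range_aPencil {g k : ℕ} (hk : k ≤ g + 1) :
    ∑ s ∈ range k, aPencil (g + 1 - s) g = g.choose (g + 1 - k) := by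
  have hterm : ∀ s ∈ range k, aPencil (g + 1 - s) g
      = (g.choose (g + 1 - (s + 1)) : ℚ) - g.choose (g + 1 - s) := by
    intro s hs
    have hs : s ≤ g := by rw [mem_range] at hs; omega
    rw [show g + 1 - s = (g - s) + 1 by omega, show g + 1 - (s + 1) = g - s by omega]
    exact aPencil_succ_eq_choose_sub_choose (Nat.sub_le g s)
  rw [sum_congr rfl hterm, sum_range_sub (fun s ↦ (g.choose (g + 1 - s) : ℚ)),
    Nat.sub_zero, Nat.choose_succ_self, Nat.cast_zero, sub_zero]

theorem two_prym_count_general (i : ℕ) :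
    4 * ∑ s ∈ Finset.range i, aPencil (2 * i - s - 1) (2 * i - 2)
      - 2 * aPencil i (2 * i - 2)
      = 2 * ((2 * i - 1).choose i : ℚ) := by
  cases i with
  | zero => norm_num [aPencil]
  | succ n =>
    have hsum : ∑ s ∈ range (n + 1), aPencil (2 * (n + 1) - s - 1) (2 * (n + 1) - 2)
        = (2 * n).choose n := by
      have h := sum_range_aPencil (g := 2 * n) (k := n + 1) (by omega)
      rw [show 2 * n + 1 - (n + 1) = n by omega] at h
      rw [← h]
      refine sum_congr (by rfl) fun s _ ↦ ?_
      congr 1; omega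
    have hmid : aPencil (n + 1) (2 * (n + 1) - 2) = (2 * n).choose n - (2 * n).choose (n + 1) := by
      rw [show 2 * (n + 1) - 2 = 2 * n by omega]
      exact aPencil_succ_eq_choose_sub_choose (by omega)
    have hpascal :
        (2 * (n + 1) - 1).choose (n + 1) = (2 * n).choose n + (2 * n).choose (n + 1) := by
      rw [show 2 * (n + 1) - 1 = 2 * n + 1 by omega, Nat.choose_succ_succ']
    rw [hsum, hmid, hpascal]
    push_cast
    ring

theorem two_prym_count (i : ℕ) (hi : 2 ≤ i) :
    4 * ∑ s ∈ Finset.range i, aPencil (2 * i - s - 1) (2 * i - 2)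
      - 2 * aPencil i (2 * i - 2)
      = 2 * ((2 * i - 1).choose i : ℚ) :=
  two_prym_count_general i
end

section
/- For i ≥ 1, the identity ∑_{s=0}^{i-1} (2i-2s-1)(2i-2s+1)(i-s+1)·C(2i-1, s-1) = (2i² - (5/2)i + 1)·C(2i-1, i) - (i - 1/2)·2^{2i-2} holds in the rationals, where C(2i-1, -1) := 0. -/
/-!
Shift to `i = j + 1`, `n = 2j + 1`, `t = s - 1`. Since `C(n, t+1) (t+1) = C(n, t) (n - t)`, the
summand `(2j-2t-1)(2j-2t+1)(j-t+1) C(n, t)` is `-(j + 1/2) C(n, t) + F(t+1) - F(t)` for the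
Gosper-type certificate `F(t) = t Q(t) C(n, t)` with `Q` quadratic. The telescoping part leaves
`F(j)`, and the rest is `j + 1/2` times the half row sum `∑_{t<j} C(2j+1, t) = 4^j - C(2j+1, j)`.
-/

open Finset

lemma Nat.cast_choose_succ_mul {R : Type*} [CommRing R] (n k : ℕ) :
    (n.choose (k + 1) : R) * (k + 1) = n.choose k * (n - k) := by
  rcases le_or_gt k n with hk | hk
  · have h := congrArg (Nat.cast : ℕ → R) (Nat.choose_succ_right_eq n k)
    push_cast [Nat.cast_sub hk] at h
    exact h
  · simp [Nat.choose_eq_zero_of_lt hk, Nat.choose_eq_zero_of_lt (Nat.lt_succ_of_lt hk)]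

lemma sum_range_choose_lt_halfway (j : ℕ) :
    ∑ t ∈ range j, ((2 * j + 1).choose t : ℚ) = 4 ^ j - (2 * j + 1).choose j := by
  have h := Nat.sum_range_choose_halfway j
  rw [sum_range_succ] at h
  rw [eq_sub_iff_add_eq]
  exact_mod_cast h

namespace CaseIIdentity

def certQuadratic (j t : ℚ) : ℚ :=
  2 * t ^ 2 - (4 * j + 3) * t + 2 * j ^ 2 + 5 * j + 1 / 2

def certificate (j t : ℕ) : ℚ :=
  t * certQuadratic j t * (2 * j + 1).choose t

lemma summand_eq_certificate_poly (j t : ℚ) :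
    (2 * j - 2 * t - 1) * (2 * j - 2 * t + 1) * (j - t + 1)
      = -(j + 1 / 2) + (2 * j + 1 - t) * certQuadratic j (t + 1) - t * certQuadratic j t := by
  unfold certQuadratic
  ring

lemma summand_eq_sub_certificate (j t : ℕ) :
    (2 * (j : ℚ) - 2 * t - 1) * (2 * j - 2 * t + 1) * (j - t + 1) * (2 * j + 1).choose t
      = -(j + 1 / 2) * (2 * j + 1).choose t + (certificate j (t + 1) - certificate j t) := by
  have hstep : ((2 * j + 1).choose (t + 1) : ℚ) * (t + 1)
      = (2 * j + 1).choose t * (2 * j + 1 - t) := by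
    simpa using Nat.cast_choose_succ_mul (R := ℚ) (2 * j + 1) t
  simp only [certificate, summand_eq_certificate_poly]
  push_cast
  linear_combination -certQuadratic j (t + 1) * hstep

lemma sum_range_summand_eq (j : ℕ) :
    ∑ t ∈ range j,
        (2 * (j : ℚ) - 2 * t - 1) * (2 * j - 2 * t + 1) * (j - t + 1) * (2 * j + 1).choose t
      = (2 * j ^ 2 + 3 / 2 * j + 1 / 2) * (2 * j + 1).choose j - (j + 1 / 2) * 4 ^ j := by
  simp only [summand_eq_sub_certificate, sum_add_distrib, ← mul_sum, sum_range_sub,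
    sum_range_choose_lt_halfway]
  simp only [certificate, certQuadratic, Nat.cast_zero, zero_mul, sub_zero]
  ring

end CaseIIdentity

theorem caseI_identity2 (i : ℕ) (hi : 1 ≤ i) :
    ∑ s ∈ Finset.range i,
        ((2 * (i : ℚ) - 2 * s - 1) * (2 * (i : ℚ) - 2 * s + 1)
          * ((i : ℚ) - s + 1)
          * (if s = 0 then 0 else ((2 * i - 1).choose (s - 1) : ℚ)))
      = (2 * (i : ℚ) ^ 2 - (5 / 2) * i + 1) * ((2 * i - 1).choose i : ℚ)
        - ((i : ℚ) - 1 / 2) * 2 ^ (2 * i - 2) := by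
  obtain ⟨j, rfl⟩ := Nat.exists_eq_add_of_le' hi
  have hrow : 2 * (j + 1) - 1 = 2 * j + 1 := by omega
  have hexp : 2 * (j + 1) - 2 = 2 * j := by omega
  rw [hrow, hexp, Nat.choose_symm_half, sum_range_succ']
  simp only [Nat.add_one_ne_zero, ↓reduceIte, Nat.add_sub_cancel, mul_zero, add_zero]
  convert CaseIIdentity.sum_range_summand_eq j using 1
  · refine sum_congr rfl fun t _ => ?_
    push_cast
    ring
  · rw [pow_mul]
    push_cast
    ring
end
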